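/- arXiv:1103.4048 — 2 statements merged into one kernel-verified Lean document; each statement's English description precedes it below -/
import Mathlib

section
/- The rational function F(w¹,w²,w³,w⁴) = w¹((w¹)²/12 + w²w⁴/6 + (w³)²/12) + w³(w⁴)³/648 + (w²)²w³/(2w⁴) − w²(w³)³/(3(w⁴)²) + (w³)⁵/(10(w⁴)³) satisfies the WDVV associativity equations on the domain {w⁴ ≠ 0} ⊂ ℝ⁴ with constant metric η given by η₁₁ = 1/2, η₂₄ = η₄₂ = 1/6, η₃₃ = 1/6 and all other entries zero: for all α,β one has ∂₁∂_α∂_β F = η_{αβ}, the matrix η is invertible, and the structure constants c^γ_{αβ} = Σ_ε (η⁻¹)^{γε} ∂_ε∂_α∂_β F satisfy Σ_ε c^ε_{αβ} c^σ_{εγ} = Σ_ε c^ε_{αγ} c^σ_{εβ} for all α,β,γ,σ at every point with w⁴ ≠ 0. -/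
/-- Partial derivative of `f : (Fin N → ℝ) → ℝ` in the `i`-th coordinate direction. -/
noncomputable def pd {N : ℕ} (i : Fin N) (f : (Fin N → ℝ) → ℝ) : (Fin N → ℝ) → ℝ :=
  fun x => fderiv ℝ f x (Pi.single i 1)

/-- The potential. -/
noncomputable def FF : (Fin 4 → ℝ) → ℝ :=
  fun w => w 0 * ((w 0) ^ 2 / 12 + w 1 * w 3 / 6 + (w 2) ^ 2 / 12) + w 2 * (w 3) ^ 3 / 648 + (w 1) ^ 2 * w 2 / (2 * w 3) - w 1 * (w 2) ^ 3 / (3 * (w 3) ^ 2) + (w 2) ^ 5 / (10 * (w 3) ^ 3)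

/-- The constant metric. -/
noncomputable def eta : Matrix (Fin 4) (Fin 4) ℝ :=
  !![1/2, 0, 0, 0; 0, 0, 0, 1/6; 0, 0, 1/6, 0; 0, 1/6, 0, 0]

/-- Third partial derivatives `c_(αβγ) = ∂_α ∂_β ∂_γ F`. -/
noncomputable def c3 (α β γ : Fin 4) (x : Fin 4 → ℝ) : ℝ :=
  pd α (pd β (pd γ FF)) x

/-- Structure constants `c^γ_(αβ) = Σ_ε (η⁻¹)^(γε) c_(εαβ)`. -/
noncomputable def cUp (γ α β : Fin 4) (x : Fin 4 → ℝ) : ℝ :=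
  ∑ ε, eta⁻¹ γ ε * c3 ε α β x

/-!
On `{w⁴ ≠ 0}` the potential `F` is a Laurent polynomial with rational coefficients in which only
`w⁴` is inverted. The formal rule `∂ᵢ (c wᵐ) = c mᵢ w^(m - eᵢ)` computes its partial derivatives
wherever all monomials are defined, an open condition, so it can be iterated. The third
derivatives, the structure constants `c^γ_{αβ} = (η⁻¹)^{γε} c_{εαβ}` and both sides of the
associativity equations are therefore explicit Laurent polynomials, and every identity to be proved
becomes the vanishing of the normal form of a difference of Laurent polynomials, which is a finite
computation.
-/

open Filter Topology

/-- Lists rather than finitely supported functions, so that normal forms can be compared by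
kernel computation. -/
abbrev LaurentSum (N : ℕ) := List (ℚ × (Fin N → ℤ))

namespace LaurentSum

variable {N : ℕ}

noncomputable def monomial (m : Fin N → ℤ) (x : Fin N → ℝ) : ℝ := ∏ i, x i ^ m i

noncomputable def eval (p : LaurentSum N) (x : Fin N → ℝ) : ℝ :=
  (p.map fun t => (t.1 : ℝ) * monomial t.2 x).sum

def const (c : ℚ) : LaurentSum N := [(c, 0)]

def smul (c : ℚ) (p : LaurentSum N) : LaurentSum N := p.map fun t => (c * t.1, t.2)

def sub (p q : LaurentSum N) : LaurentSum N := p ++ smul (-1) q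

def mul (p q : LaurentSum N) : LaurentSum N :=
  p.flatMap fun s => q.map fun t => (s.1 * t.1, s.2 + t.2)

/-- Terms not involving `x i` are dropped rather than kept with coefficient `0`, which would
create a negative exponent of a coordinate that may vanish (see `regular_pderiv`). -/
def pderiv (i : Fin N) (p : LaurentSum N) : LaurentSum N :=
  p.filterMap fun t =>
    if t.2 i = 0 then none else some (t.1 * t.2 i, Function.update t.2 i (t.2 i - 1))

def insertTerm (t : ℚ × (Fin N → ℤ)) : LaurentSum N → LaurentSum N
  | [] => [t]
  | s :: p => if s.2 = t.2 then (s.1 + t.1, s.2) :: p else s :: insertTerm t p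

def collect (p : LaurentSum N) : LaurentSum N := (p.foldr insertTerm []).filter (·.1 ≠ 0)

def Regular (x : Fin N → ℝ) (p : LaurentSum N) : Prop := ∀ t ∈ p, ∀ i, x i ≠ 0 ∨ 0 ≤ t.2 i

variable {p q : LaurentSum N} {x : Fin N → ℝ}

@[simp] lemma eval_nil : eval ([] : LaurentSum N) x = 0 := rfl

@[simp] lemma eval_cons (t : ℚ × (Fin N → ℤ)) :
    eval (t :: p) x = t.1 * monomial t.2 x + eval p x := List.sum_cons

@[simp] lemma eval_append : eval (p ++ q) x = eval p x + eval q x := by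
  simp [eval]

lemma eval_flatMap {ι : Type*} (l : List ι) (f : ι → LaurentSum N) :
    eval (l.flatMap f) x = (l.map fun i => eval (f i) x).sum := by
  induction l with
  | nil => rfl
  | cons i l ih => simp [ih]

@[simp] lemma eval_const (c : ℚ) : eval (const c : LaurentSum N) x = c := by
  simp [const, monomial]

@[simp] lemma eval_smul (c : ℚ) : eval (smul c p) x = c * eval p x := by
  induction p with
  | nil => simp [smul]
  | cons t p ih =>
    simp only [smul, List.map_cons, eval_cons, Rat.cast_mul] at ih ⊢
    rw [ih]
    ring

lemma eval_sub : eval (sub p q) x = eval p x - eval q x := by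
  simp only [sub, eval_append, eval_smul, Rat.cast_neg, Rat.cast_one]
  ring

lemma eval_insertTerm (t : ℚ × (Fin N → ℤ)) :
    eval (insertTerm t p) x = t.1 * monomial t.2 x + eval p x := by
  induction p with
  | nil => simp [insertTerm]
  | cons s p ih =>
    by_cases h : s.2 = t.2
    · simp only [insertTerm, h, if_true, eval_cons, Rat.cast_add]
      ring
    · simp only [insertTerm, h, if_false, eval_cons, ih]
      ring

lemma eval_collect : eval (collect p) x = eval p x := by
  have h_filter (l : LaurentSum N) : eval (l.filter (·.1 ≠ 0)) x = eval l x := by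
    induction l with
    | nil => rfl
    | cons t l ih =>
      rw [List.filter_cons]
      by_cases ht : t.1 = 0 <;> simpa [ht] using ih
  rw [collect, h_filter]
  induction p with
  | nil => rfl
  | cons t p ih => rw [List.foldr_cons, eval_insertTerm, ih, eval_cons]

abbrev FormallyEq (p q : LaurentSum N) : Prop := collect (sub p q) = []

lemma FormallyEq.eval_eq (h : FormallyEq p q) : eval p x = eval q x := by
  have := congrArg (eval · x) h
  simp only [eval_collect, eval_sub, eval_nil] at this
  linarith

lemma monomial_add {m n : Fin N → ℤ} (h : ∀ i, x i ≠ 0 ∨ 0 ≤ m i ∧ 0 ≤ n i) :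
    monomial (m + n) x = monomial m x * monomial n x := by
  rw [monomial, monomial, monomial, ← Finset.prod_mul_distrib]
  refine Finset.prod_congr rfl fun i _ => zpow_add' ?_
  rcases h i with h | ⟨hm, hn⟩
  · exact Or.inl h
  · omega

lemma regular_cons_iff {t : ℚ × (Fin N → ℤ)} :
    Regular x (t :: p) ↔ (∀ i, x i ≠ 0 ∨ 0 ≤ t.2 i) ∧ Regular x p :=
  List.forall_mem_cons

lemma eval_map_mul_left {s : ℚ × (Fin N → ℤ)} (hs : ∀ i, x i ≠ 0 ∨ 0 ≤ s.2 i)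
    (hq : Regular x q) :
    eval (q.map fun t => (s.1 * t.1, s.2 + t.2)) x = s.1 * monomial s.2 x * eval q x := by
  induction q with
  | nil => simp
  | cons t q ih =>
    rw [regular_cons_iff] at hq
    rw [List.map_cons, eval_cons, eval_cons, ih hq.2, Rat.cast_mul,
      monomial_add fun i => (hs i).elim Or.inl fun hs => (hq.1 i).imp_right (⟨hs, ·⟩)]
    ring

lemma eval_mul (hp : Regular x p) (hq : Regular x q) : eval (mul p q) x = eval p x * eval q x := by
  induction p with
  | nil => simp [mul]
  | cons s p ih =>
    rw [regular_cons_iff] at hp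
    simp only [mul, List.flatMap_cons, eval_append, eval_cons] at ih ⊢
    rw [eval_map_mul_left hp.1 hq, ih hp.2]
    ring

lemma regular_smul (c : ℚ) (hp : Regular x p) : Regular x (smul c p) := by
  intro t ht
  obtain ⟨s, hs, rfl⟩ := List.mem_map.1 ht
  exact hp s hs

lemma regular_flatMap {ι : Type*} {l : List ι} {f : ι → LaurentSum N}
    (hf : ∀ i ∈ l, Regular x (f i)) : Regular x (l.flatMap f) := by
  simp only [Regular, List.mem_flatMap] at hf ⊢
  rintro t ⟨i, hi, ht⟩
  exact hf i hi t ht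

lemma regular_insertTerm {t : ℚ × (Fin N → ℤ)} (ht : ∀ i, x i ≠ 0 ∨ 0 ≤ t.2 i)
    (hp : Regular x p) : Regular x (insertTerm t p) := by
  induction p with
  | nil => exact regular_cons_iff.2 ⟨ht, List.forall_mem_nil _⟩
  | cons s p ih =>
    rw [regular_cons_iff] at hp
    unfold insertTerm
    split_ifs
    · exact regular_cons_iff.2 hp
    · exact regular_cons_iff.2 ⟨hp.1, ih hp.2⟩

lemma regular_collect (hp : Regular x p) : Regular x (collect p) := by
  suffices Regular x (p.foldr insertTerm []) from fun t ht => this t (List.mem_filter.1 ht).1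
  induction p with
  | nil => exact List.forall_mem_nil _
  | cons t p ih =>
    rw [regular_cons_iff] at hp
    exact regular_insertTerm hp.1 (ih hp.2)

lemma regular_pderiv (i : Fin N) (hp : Regular x p) : Regular x (pderiv i p) := by
  intro t ht j
  simp only [pderiv, List.mem_filterMap, Option.ite_none_left_eq_some, Option.some.injEq] at ht
  obtain ⟨s, hs, hsi, rfl⟩ := ht
  by_cases hj : j = i
  · subst hj
    simp only [Function.update_self]
    exact (hp s hs j).imp_right fun h => by omega
  · simpa [hj] using hp s hs j

lemma Regular.eventually (hp : Regular x p) : ∀ᶠ y in 𝓝 x, Regular y p := by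
  refine (eventually_all_finite p.finite_toSet).2 fun t ht => eventually_all.2 fun i => ?_
  rcases hp t ht i with h | h
  · exact ((continuous_apply i).continuousAt.eventually_ne h).mono fun _ => Or.inl
  · exact Eventually.of_forall fun _ => Or.inr h

lemma eval_pderiv_cons (i : Fin N) (t : ℚ × (Fin N → ℤ)) :
    eval (pderiv i (t :: p)) x =
      t.1 * (t.2 i * monomial (Function.update t.2 i (t.2 i - 1)) x) + eval (pderiv i p) x := by
  by_cases h : t.2 i = 0 <;> simp [pderiv, h, mul_assoc]

lemma hasFDerivAt_monomial {m : Fin N → ℤ} (hm : ∀ i, x i ≠ 0 ∨ 0 ≤ m i) :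
    HasFDerivAt (monomial m) (∑ i, (m i * monomial (Function.update m i (m i - 1)) x) •
      (ContinuousLinearMap.proj i : (Fin N → ℝ) →L[ℝ] ℝ)) x := by
  have hg (i : Fin N) : HasFDerivAt (fun y : Fin N → ℝ => y i ^ m i)
      (((m i : ℝ) * x i ^ (m i - 1)) • (ContinuousLinearMap.proj i : (Fin N → ℝ) →L[ℝ] ℝ)) x :=
    (hasDerivAt_zpow (m i) (x i) (hm i)).comp_hasFDerivAt (f := fun y : Fin N → ℝ => y i) x
      (hasFDerivAt_apply i x)
  refine (HasFDerivAt.finsetProd fun i _ => hg i).congr_fderiv (Finset.sum_congr rfl fun i _ => ?_)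
  rw [smul_smul, monomial]
  congr 1
  simp only [← Finset.sdiff_singleton_eq_erase, Function.apply_update (fun j (k : ℤ) => x j ^ k),
    Finset.prod_update_of_mem (Finset.mem_univ i)]
  ring

theorem hasFDerivAt_eval (hp : Regular x p) :
    HasFDerivAt (eval p) (∑ i, eval (pderiv i p) x •
      (ContinuousLinearMap.proj i : (Fin N → ℝ) →L[ℝ] ℝ)) x := by
  induction p with
  | nil => exact (hasFDerivAt_const (0 : ℝ) x).congr_fderiv (by simp [pderiv])
  | cons t p ih =>
    rw [regular_cons_iff] at hp
    refine (((hasFDerivAt_monomial hp.1).const_mul (t.1 : ℝ)).add (ih hp.2)).congr_fderiv ?_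
    rw [Finset.smul_sum, ← Finset.sum_add_distrib]
    refine Finset.sum_congr rfl fun i _ => ?_
    rw [smul_smul, ← add_smul, eval_pderiv_cons]

lemma pd_eval (i : Fin N) (hp : Regular x p) : pd i (eval p) x = eval (pderiv i p) x := by
  rw [pd, (hasFDerivAt_eval hp).fderiv]
  simp [Pi.single_apply]

lemma pd_eventuallyEq {f : (Fin N → ℝ) → ℝ} (i : Fin N) (hf : f =ᶠ[𝓝 x] eval p)
    (hp : Regular x p) : pd i f =ᶠ[𝓝 x] eval (pderiv i p) := by
  filter_upwards [hf.fderiv (𝕜 := ℝ), hp.eventually] with y hfy hpy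
  rw [← pd_eval i hpy]
  exact congrArg (· (Pi.single i 1)) hfy

end LaurentSum

open LaurentSum

def potential : LaurentSum 4 :=
  [(1/12, ![3, 0, 0, 0]), (1/6, ![1, 1, 0, 1]), (1/12, ![1, 0, 2, 0]), (1/648, ![0, 0, 1, 3]),
    (1/2, ![0, 2, 1, -1]), (-1/3, ![0, 1, 3, -2]), (1/10, ![0, 0, 5, -3])]

lemma FF_eq_eval_potential : FF = potential.eval := by
  funext w
  simp only [FF, potential, eval, monomial, Fin.prod_univ_four, List.map_cons, List.map_nil,
    List.sum_cons, List.sum_nil, Matrix.cons_val, Int.reduceNeg, zpow_neg, zpow_ofNat, div_eq_mul_inv]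
  push_cast
  ring

lemma regular_potential {x : Fin 4 → ℝ} (hx : x 3 ≠ 0) : Regular x potential := by
  have h : ∀ t ∈ potential, ∀ i : Fin 4, i = 3 ∨ 0 ≤ t.2 i := by decide
  exact fun t ht i => (h t ht i).imp (fun hi => by rwa [hi]) id

def thirdDeriv (α β γ : Fin 4) : LaurentSum 4 := pderiv α (pderiv β (pderiv γ potential))

lemma c3_eq_eval {x : Fin 4 → ℝ} (hx : x 3 ≠ 0) (α β γ : Fin 4) :
    c3 α β γ x = (thirdDeriv α β γ).eval x := by
  have hp := regular_potential hx
  have h0 : FF =ᶠ[𝓝 x] potential.eval := .of_eq FF_eq_eval_potential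
  exact (pd_eventuallyEq α (pd_eventuallyEq β (pd_eventuallyEq γ h0 hp) (regular_pderiv γ hp))
    (regular_pderiv β (regular_pderiv γ hp))).eq_of_nhds

def etaQ : Matrix (Fin 4) (Fin 4) ℚ := !![1/2, 0, 0, 0; 0, 0, 0, 1/6; 0, 0, 1/6, 0; 0, 1/6, 0, 0]

def etaInvQ : Matrix (Fin 4) (Fin 4) ℚ := !![2, 0, 0, 0; 0, 0, 0, 6; 0, 0, 6, 0; 0, 6, 0, 0]

lemma eta_eq_map : eta = etaQ.map (↑) := by
  ext i j
  fin_cases i <;> fin_cases j <;> norm_num [eta, etaQ]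

lemma eta_mul_etaInvQ : eta * etaInvQ.map (↑) = 1 := by
  have h : etaQ * etaInvQ = 1 := by decide +kernel
  calc eta * etaInvQ.map (↑) = (etaQ * etaInvQ).map (Rat.castHom ℝ) := by
        rw [eta_eq_map, Matrix.map_mul]; rfl
    _ = 1 := by simp [h]

lemma thirdDeriv_zero_formallyEq (α β : Fin 4) :
    FormallyEq (thirdDeriv 0 α β) (const (etaQ α β)) := by
  revert α β
  decide +kernel

/-- Collected here (dropping the many zero terms coming from `η⁻¹`) so that the products in
`tripleProduct` stay small enough to normalize by kernel computation. -/
def structureConst (γ α β : Fin 4) : LaurentSum 4 :=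
  collect ((List.finRange 4).flatMap fun ε => smul (etaInvQ γ ε) (thirdDeriv ε α β))

lemma regular_structureConst {x : Fin 4 → ℝ} (hx : x 3 ≠ 0) (γ α β : Fin 4) :
    Regular x (structureConst γ α β) :=
  regular_collect <| regular_flatMap fun _ _ => regular_smul _ <|
    regular_pderiv _ <| regular_pderiv _ <| regular_pderiv _ <| regular_potential hx

lemma cUp_eq_eval {x : Fin 4 → ℝ} (hx : x 3 ≠ 0) (γ α β : Fin 4) :
    cUp γ α β x = (structureConst γ α β).eval x := by
  rw [structureConst, eval_collect, eval_flatMap, ← Fin.sum_univ_def, cUp,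
    Matrix.inv_eq_right_inv eta_mul_etaInvQ]
  simp only [Matrix.map_apply, c3_eq_eval hx, eval_smul]

/-- The `σ`-component of `(e_α ∘ e_β) ∘ e_γ`. -/
def tripleProduct (α β γ σ : Fin 4) : LaurentSum 4 :=
  (List.finRange 4).flatMap fun ε => mul (structureConst ε α β) (structureConst σ ε γ)

lemma sum_cUp_mul_cUp_eq_eval {x : Fin 4 → ℝ} (hx : x 3 ≠ 0) (α β γ σ : Fin 4) :
    ∑ ε, cUp ε α β x * cUp σ ε γ x = (tripleProduct α β γ σ).eval x := by
  simp only [tripleProduct, eval_flatMap, ← Fin.sum_univ_def, cUp_eq_eval hx,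
    eval_mul (regular_structureConst hx _ _ _) (regular_structureConst hx _ _ _)]

lemma tripleProduct_formallyEq (α β γ σ : Fin 4) :
    FormallyEq (tripleProduct α β γ σ) (tripleProduct α γ β σ) := by
  revert α β γ σ
  decide +kernel

theorem stmt_5 :
    (∀ (α β : Fin 4) (x : Fin 4 → ℝ), (_ : x 3 ≠ 0) → c3 0 α β x = eta α β) ∧
    IsUnit eta.det ∧
    (∀ (α β γ σ : Fin 4) (x : Fin 4 → ℝ), (_ : x 3 ≠ 0) → 
      ∑ ε, cUp ε α β x * cUp σ ε γ x = ∑ ε, cUp ε α γ x * cUp σ ε β x) := by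
  refine ⟨fun α β x hx => ?_, Matrix.isUnit_det_of_right_inverse eta_mul_etaInvQ,
    fun α β γ σ x hx => ?_⟩
  · rw [c3_eq_eval hx, (thirdDeriv_zero_formallyEq α β).eval_eq, eval_const,
      eta_eq_map, Matrix.map_apply]
  · rw [sum_cUp_mul_cUp_eq_eval hx, sum_cUp_mul_cUp_eq_eval hx]
    exact (tripleProduct_formallyEq α β γ σ).eval_eq
end

section
/- The rational function F(w¹,w²,w³,w⁴) = w¹((w¹)²/12 + w²w⁴/6 + (w³)²/12) + w³(w⁴)³/648 + (w²)²w³/(2w⁴) − w²(w³)³/(3(w⁴)²) + (w³)⁵/(10(w⁴)³) is quasi-homogeneous of degree 3 with respect to the Euler vector field E = w¹∂₁ + (4/3)w²∂₂ + w³∂₃ + (2/3)w⁴∂₄: at every point with w⁴ ≠ 0, w¹·∂₁F + (4/3)w²·∂₂F + w³·∂₃F + (2/3)w⁴·∂₄F = 3F. -/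
/-! `FF` is weighted homogeneous: `FF (t³w₀, t⁴w₁, t³w₂, t²w₃) = t⁹ FF w` for `t ≠ 0`.
Differentiating this at `t = 1` gives Euler's relation with weights `(3, 4, 3, 2)` and degree `9`,
which is the claim multiplied by `3`. -/

theorem fderiv_apply_eq_sum_pd {N : ℕ} (f : (Fin N → ℝ) → ℝ) (x v : Fin N → ℝ) :
    fderiv ℝ f x v = ∑ i, v i * pd i f x := by
  conv_lhs => rw [← Finset.univ_sum_single v]
  rw [map_sum]
  refine Finset.sum_congr rfl fun i _ => ?_
  rw [show Pi.single i (v i) = v i • (Pi.single i 1 : Fin N → ℝ) by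
    rw [← Pi.single_smul', smul_eq_mul, mul_one], map_smul, smul_eq_mul, pd]

theorem sum_weight_mul_pd_eq_of_scaling {N : ℕ} {f : (Fin N → ℝ) → ℝ} {x : Fin N → ℝ}
    (w : Fin N → ℕ) (k : ℕ) (hf : DifferentiableAt ℝ f x)
    (hscale : ∀ t : ℝ, t ≠ 0 → f (fun i => t ^ w i * x i) = t ^ k * f x) :
    ∑ i, (w i : ℝ) * x i * pd i f x = k * f x := by
  set γ : ℝ → Fin N → ℝ := fun t i => t ^ w i * x i
  have hγ : HasDerivAt γ (fun i => (w i : ℝ) * x i) 1 := by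
    rw [hasDerivAt_pi]
    intro i
    simpa using (hasDerivAt_pow (w i) (1 : ℝ)).mul_const (x i)
  have hγ1 : γ 1 = x := by simp [γ]
  have hchain : HasDerivAt (f ∘ γ) (fderiv ℝ f x fun i => (w i : ℝ) * x i) 1 :=
    hf.hasFDerivAt.comp_hasDerivAt_of_eq 1 hγ hγ1.symm
  have hpow : HasDerivAt (f ∘ γ) (k * f x) 1 := by
    have h := (hasDerivAt_pow k (1 : ℝ)).mul_const (f x)
    simp only [one_pow, mul_one] at h
    refine h.congr_of_eventuallyEq ?_
    filter_upwards [eventually_ne_nhds one_ne_zero] with t ht using hscale t ht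
  rw [← hchain.unique hpow, fderiv_apply_eq_sum_pd]

theorem differentiableAt_FF {x : Fin 4 → ℝ} (hx : x 3 ≠ 0) : DifferentiableAt ℝ FF x := by
  unfold FF
  fun_prop (disch := simp [hx])

theorem FF_scaling {x : Fin 4 → ℝ} (hx : x 3 ≠ 0) {t : ℝ} (ht : t ≠ 0) :
    FF (fun i => t ^ ![3, 4, 3, 2] i * x i) = t ^ 9 * FF x := by
  simp only [FF, Matrix.cons_val]
  field_simp

theorem stmt_11 :
    ∀ x : Fin 4 → ℝ, (_ : x 3 ≠ 0) → 
      1 * x 0 * pd 0 FF x + (4/3) * x 1 * pd 1 FF x + 1 * x 2 * pd 2 FF x + (2/3) * x 3 * pd 3 FF x = 3 * FF x := by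
  intro x hx
  have h := sum_weight_mul_pd_eq_of_scaling ![3, 4, 3, 2] 9 (differentiableAt_FF hx)
    fun _ ht => FF_scaling hx ht
  simp only [Fin.sum_univ_four, Matrix.cons_val_zero, Matrix.cons_val_one, Matrix.cons_val,
    Nat.cast_ofNat] at h
  linarith
end
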